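/- For every multigraph G, the regularization R(G) satisfies ω(G) ≤ ω(R(G)) ≤ max(Δ(G), ω(G)). -/

import Mathlib

open Finset

/-- A multigraph: a finite vertex type, a finite edge type, an endpoints map
into unordered pairs of vertices, and no loops. -/
structure Multigraph where
  V : Type
  E : Type
  fintypeV : Fintype V
  decEqV : DecidableEq V
  fintypeE : Fintype E
  decEqE : DecidableEq E
  ends : E → Sym2 V
  noLoops : ∀ e, ¬ (ends e).IsDiag

attribute [instance] Multigraph.fintypeV Multigraph.decEqV Multigraph.fintypeE Multigraph.decEqE

namespace Multigraph

open scoped Classical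

variable (G : Multigraph)

/-- The degree of a vertex: the number of edges incident to it. -/
noncomputable def degree (x : G.V) : ℕ :=
  (Finset.univ.filter fun e => x ∈ G.ends e).card

/-- The maximum vertex degree Δ(G). -/
noncomputable def maxDegree : ℕ :=
  Finset.univ.sup fun x : G.V => G.degree x

/-- E(S): the edges with both endpoints in S. -/
noncomputable def edgesIn (S : Finset G.V) : Finset G.E :=
  Finset.univ.filter fun e => ∀ x ∈ G.ends e, x ∈ S

/-- Ceiling division of natural numbers: ⌈a / b⌉. -/
def ceilDiv (a b : ℕ) : ℕ := (a + b - 1) / b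

/-- The density ω(G) = max over vertex subsets S with |S| ≥ 2 of ⌈|E(S)| / ⌊|S|/2⌋⌉. -/
noncomputable def density : ℕ :=
  (Finset.univ.powerset.filter fun S : Finset G.V => 2 ≤ S.card).sup
    fun S => ceilDiv (G.edgesIn S).card (S.card / 2)

/-- A proper edge-coloring with colors `Fin c`: adjacent (distinct, sharing an endpoint)
edges receive distinct colors. -/
def IsProperEdgeColoring (c : ℕ) (col : G.E → Fin c) : Prop :=
  ∀ e f : G.E, e ≠ f → (∃ x : G.V, x ∈ G.ends e ∧ x ∈ G.ends f) → col e ≠ col f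

/-- The chromatic index χ'(G): the least number of colors in a proper edge-coloring. -/
noncomputable def chromaticIndex : ℕ :=
  sInf {c : ℕ | ∃ col : G.E → Fin c, G.IsProperEdgeColoring c col}

/-- μ(x): the set of colors used on the edges incident to x. -/
noncomputable def mu {c : ℕ} (col : G.E → Fin c) (x : G.V) : Finset (Fin c) :=
  (Finset.univ.filter fun e => x ∈ G.ends e).image col

/-- A degree-coloring with c colors: the degree condition and the cover condition. -/
def IsDegreeColoring (c : ℕ) (μ : G.V → Finset (Fin c)) : Prop :=
  (∀ x : G.V, (μ x).card = G.degree x) ∧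
  ∀ S : Finset G.V,
    (G.edgesIn S).card ≤ ∑ i : Fin c, (S.filter fun x => i ∈ μ x).card / 2

/-- The degree-coloring index τ(G): the least c admitting a degree-coloring. -/
noncomputable def tau : ℕ :=
  sInf {c : ℕ | ∃ μ : G.V → Finset (Fin c), G.IsDegreeColoring c μ}

/-- A matching: a set of pairwise non-adjacent edges. -/
def IsMatching (M : Finset G.E) : Prop :=
  ∀ e ∈ M, ∀ f ∈ M, e ≠ f → ∀ x : G.V, ¬ (x ∈ G.ends e ∧ x ∈ G.ends f)

/-- π(F): the maximum size of a matching consisting of edges from F. -/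
noncomputable def matchingNumber (F : Finset G.E) : ℕ :=
  (F.powerset.filter fun M => G.IsMatching M).sup Finset.card

/-- ω*(G) = max over nonempty F ⊆ E of ⌈|F| / π(F)⌉. -/
noncomputable def omegaStar : ℕ :=
  (Finset.univ.powerset.filter fun F : Finset G.E => F.Nonempty).sup
    fun F => ceilDiv F.card (G.matchingNumber F)

/-- H is a sub-multigraph of G. -/
def IsSub (H G : Multigraph) : Prop :=
  ∃ (f : H.V ↪ G.V) (g : H.E ↪ G.E),
    ∀ e : H.E, G.ends (g e) = (H.ends e).map f

/-- H is an induced sub-multigraph of G: additionally every edge of G with both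
endpoints in the image of the vertex embedding comes from H. -/
def IsInducedSub (H G : Multigraph) : Prop :=
  ∃ (f : H.V ↪ G.V) (g : H.E ↪ G.E),
    (∀ e : H.E, G.ends (g e) = (H.ends e).map f) ∧
    ∀ e' : G.E, (∀ x ∈ G.ends e', x ∈ Set.range f) → e' ∈ Set.range g

/-- Regularization: if G is regular with ω(G) ≤ Δ(G), R(G) = G; otherwise take two
disjoint copies of G and join each vertex x to its copy by
max(Δ(G), ω(G)) − deg_G(x) parallel edges. -/
noncomputable def regularize (G : Multigraph) : Multigraph :=
  if (∀ x : G.V, G.degree x = G.maxDegree) ∧ G.density ≤ G.maxDegree then G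
  else
    { V := G.V ⊕ G.V
      E := G.E ⊕ G.E ⊕ (Σ x : G.V, Fin (max G.maxDegree G.density - G.degree x))
      fintypeV := inferInstance
      decEqV := inferInstance
      fintypeE := inferInstance
      decEqE := inferInstance
      ends := fun e =>
        match e with
        | Sum.inl e => (G.ends e).map Sum.inl
        | Sum.inr (Sum.inl e) => (G.ends e).map Sum.inr
        | Sum.inr (Sum.inr p) => s(Sum.inl p.1, Sum.inr p.1)
      noLoops := by
        rintro (e | e | p)
        · rw [Sym2.isDiag_map Sum.inl_injective]; exact G.noLoops e
        · rw [Sym2.isDiag_map Sum.inr_injective]; exact G.noLoops e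
        · rw [Sym2.mk_isDiag_iff]; simp }

end Multigraph

/-!
The lower bound holds because `G` sits inside `R(G)` as a sub-multigraph and density is
monotone under sub-multigraphs. For the upper bound put `m = max(Δ(G), ω(G))` and split a
vertex set `S` of `R(G)` into its traces `A`, `B` on the two copies of `G`. Then
`e(S) = e(A) + e(B) + ∑_{x ∈ A ∩ B} (m - deg x)`, and removing `A ∩ B` from `A` and from `B`
loses at most `∑_{x ∈ A ∩ B} deg x` edges, so
`e(S) ≤ e(A \ B) + e(B \ A) + m |A ∩ B| ≤ m (⌊|A \ B|/2⌋ + ⌊|B \ A|/2⌋ + |A ∩ B|) ≤ m ⌊|S|/2⌋`.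
-/

namespace Multigraph

variable (G : Multigraph)

lemma ceilDiv_le_iff {a b m : ℕ} (hb : 0 < b) : ceilDiv a b ≤ m ↔ a ≤ m * b := by
  rw [ceilDiv, Nat.div_le_iff_le_mul_add_pred hb, mul_comm]
  omega

lemma degree_le_maxDegree (x : G.V) : G.degree x ≤ G.maxDegree :=
  le_sup (mem_univ x)

variable {G}

lemma mem_edgesIn {S : Finset G.V} {e : G.E} : e ∈ G.edgesIn S ↔ ∀ x ∈ G.ends e, x ∈ S := by
  simp [edgesIn]

lemma exists_ends_eq (e : G.E) : ∃ u v, u ≠ v ∧ G.ends e = s(u, v) := by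
  induction h : G.ends e using Sym2.ind with
  | _ u v => exact ⟨u, v, by simpa [h] using G.noLoops e, rfl⟩

lemma two_le_card_of_mem_edgesIn {S : Finset G.V} {e : G.E} (he : e ∈ G.edgesIn S) :
    2 ≤ #S := by
  obtain ⟨u, v, huv, hends⟩ := exists_ends_eq e
  rw [mem_edgesIn, hends, Sym2.forall_mem_pair] at he
  exact one_lt_card.mpr ⟨u, he.1, v, he.2, huv⟩

variable (G)

lemma card_edgesIn_le_density_mul (S : Finset G.V) : #(G.edgesIn S) ≤ G.density * (#S / 2) := by
  by_cases hS : 2 ≤ #S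
  · rw [← ceilDiv_le_iff (by omega)]
    exact le_sup (f := fun T : Finset G.V => ceilDiv #(G.edgesIn T) (#T / 2)) (by simp [hS])
  · rw [eq_empty_of_forall_notMem fun e he => hS (two_le_card_of_mem_edgesIn he)]
    simp

lemma density_le_of_forall_card_edgesIn_le {m : ℕ}
    (h : ∀ S : Finset G.V, 2 ≤ #S → #(G.edgesIn S) ≤ m * (#S / 2)) : G.density ≤ m :=
  Finset.sup_le fun S hS => by
    rw [mem_filter] at hS
    exact (ceilDiv_le_iff (by omega)).mpr (h S hS.2)

lemma density_le_of_isSub {H : Multigraph} (hHG : H.IsSub G) : H.density ≤ G.density := by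
  obtain ⟨f, g, hends⟩ := hHG
  refine density_le_of_forall_card_edgesIn_le H fun S _ => ?_
  have hmaps : (H.edgesIn S).map g ⊆ G.edgesIn (S.map f) := by
    simp only [subset_iff, mem_map, mem_edgesIn]
    rintro _ ⟨e, he, rfl⟩ _ hx
    rw [hends, Sym2.mem_map] at hx
    obtain ⟨x, hxe, rfl⟩ := hx
    exact ⟨x, he x hxe, rfl⟩
  calc #(H.edgesIn S) = #((H.edgesIn S).map g) := (card_map g).symm
    _ ≤ #(G.edgesIn (S.map f)) := card_le_card hmaps
    _ ≤ G.density * (#(S.map f) / 2) := G.card_edgesIn_le_density_mul _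
    _ = G.density * (#S / 2) := by rw [card_map]

lemma sum_degree_eq_sum_card_filter_mem_ends (I : Finset G.V) :
    ∑ x ∈ I, G.degree x = ∑ e, #{x ∈ I | x ∈ G.ends e} := by
  simp only [degree, card_filter]
  exact sum_comm

-- An edge of `E(A)` outside `E(A \ B)` meets `A ∩ B`, and an edge of both `E(A)` and `E(B)`
-- has both endpoints in `A ∩ B`.
lemma ite_mem_edgesIn_add_le (A B : Finset G.V) (e : G.E) :
    (if e ∈ G.edgesIn A then 1 else 0) + (if e ∈ G.edgesIn B then 1 else 0) ≤
      (if e ∈ G.edgesIn (A \ B) then 1 else 0) + (if e ∈ G.edgesIn (B \ A) then 1 else 0) +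
        #{x ∈ A ∩ B | x ∈ G.ends e} := by
  obtain ⟨u, v, huv, hends⟩ := exists_ends_eq e
  have hcard : #{x ∈ A ∩ B | x ∈ s(u, v)} =
      (if u ∈ A ∩ B then 1 else 0) + (if v ∈ A ∩ B then 1 else 0) := by
    have hpair : ∀ x, (if x ∈ s(u, v) then 1 else 0) =
        (if x = u then 1 else 0) + (if x = v then 1 else 0) := by
      intro x
      by_cases hxu : x = u <;> by_cases hxv : x = v <;> simp_all
    rw [card_filter, sum_congr rfl fun x _ => hpair x, sum_add_distrib, sum_ite_eq',
      sum_ite_eq']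
  simp only [mem_edgesIn, hends, Sym2.forall_mem_pair, hcard, mem_sdiff, mem_inter]
  by_cases u ∈ A <;> by_cases u ∈ B <;> by_cases v ∈ A <;> by_cases v ∈ B <;> simp [*]

lemma card_edgesIn_add_card_edgesIn_le (A B : Finset G.V) :
    #(G.edgesIn A) + #(G.edgesIn B) ≤
      #(G.edgesIn (A \ B)) + #(G.edgesIn (B \ A)) + ∑ x ∈ A ∩ B, G.degree x := by
  simp only [fun T : Finset G.E => card_eq_sum_ite (subset_univ T), sum_degree_eq_sum_card_filter_mem_ends,
    ← sum_add_distrib]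
  exact sum_le_sum fun e _ => G.ite_mem_edgesIn_add_le A B e

abbrev double (w : G.V → ℕ) : Multigraph where
  V := G.V ⊕ G.V
  E := G.E ⊕ G.E ⊕ (Σ x : G.V, Fin (w x))
  fintypeV := inferInstance
  decEqV := inferInstance
  fintypeE := inferInstance
  decEqE := inferInstance
  ends
    | .inl e => (G.ends e).map Sum.inl
    | .inr (.inl e) => (G.ends e).map Sum.inr
    | .inr (.inr p) => s(Sum.inl p.1, Sum.inr p.1)
  noLoops := by
    rintro (e | e | p)
    · rw [Sym2.isDiag_map Sum.inl_injective]; exact G.noLoops e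
    · rw [Sym2.isDiag_map Sum.inr_injective]; exact G.noLoops e
    · rw [Sym2.mk_isDiag_iff]; simp

lemma regularize_eq_double
    (h : ¬((∀ x : G.V, G.degree x = G.maxDegree) ∧ G.density ≤ G.maxDegree)) :
    G.regularize = G.double fun x => max G.maxDegree G.density - G.degree x := by
  rw [regularize, if_neg h, double]
  congr 1
  funext e
  rcases e with e | e | p <;> rfl

lemma isSub_double (w : G.V → ℕ) : G.IsSub (G.double w) :=
  ⟨.inl, .inl, fun _ => rfl⟩

section double

variable {G} {w : G.V → ℕ} {S : Finset (G.V ⊕ G.V)}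

lemma inl_mem_edgesIn_double {e : G.E} :
    Sum.inl e ∈ (G.double w).edgesIn S ↔ e ∈ G.edgesIn S.toLeft := by
  rw [mem_edgesIn, mem_edgesIn]
  simp

lemma inr_inl_mem_edgesIn_double {e : G.E} :
    Sum.inr (Sum.inl e) ∈ (G.double w).edgesIn S ↔ e ∈ G.edgesIn S.toRight := by
  rw [mem_edgesIn, mem_edgesIn]
  simp

lemma inr_inr_mem_edgesIn_double {p : Σ x, Fin (w x)} :
    Sum.inr (Sum.inr p) ∈ (G.double w).edgesIn S ↔ p.1 ∈ S.toLeft ∩ S.toRight := by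
  rw [mem_edgesIn]
  simp

variable (S)

lemma card_edgesIn_double :
    #((G.double w).edgesIn S) =
      #(G.edgesIn S.toLeft) + #(G.edgesIn S.toRight) + ∑ x ∈ S.toLeft ∩ S.toRight, w x := by
  have hleft : ∑ e : G.E, (if Sum.inl e ∈ (G.double w).edgesIn S then 1 else 0) =
      #(G.edgesIn S.toLeft) := by
    rw [card_eq_sum_ite (subset_univ _)]
    exact sum_congr rfl fun e _ => if_congr inl_mem_edgesIn_double rfl rfl
  have hright : ∑ e : G.E, (if Sum.inr (Sum.inl e) ∈ (G.double w).edgesIn S then 1 else 0) =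
      #(G.edgesIn S.toRight) := by
    rw [card_eq_sum_ite (subset_univ _)]
    exact sum_congr rfl fun e _ => if_congr inr_inl_mem_edgesIn_double rfl rfl
  have hmiddle : ∑ x, ∑ k : Fin (w x),
      (if Sum.inr (Sum.inr ⟨x, k⟩) ∈ (G.double w).edgesIn S then 1 else 0) =
      ∑ x ∈ S.toLeft ∩ S.toRight, w x := by
    rw [← univ_inter (S.toLeft ∩ S.toRight), ← sum_ite_mem]
    refine sum_congr rfl fun x _ => ?_
    rw [sum_congr rfl fun k _ => if_congr inr_inr_mem_edgesIn_double rfl rfl]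
    simp
  rw [card_eq_sum_ite (subset_univ _), Fintype.sum_sum_type, Fintype.sum_sum_type,
    Fintype.sum_sigma, hleft, hright, hmiddle, add_assoc]

variable {m : ℕ}

lemma density_double_le (hdeg : ∀ x, G.degree x + w x ≤ m) (hdens : G.density ≤ m) :
    (G.double w).density ≤ m := by
  refine density_le_of_forall_card_edgesIn_le _ fun S _ => ?_
  set A := S.toLeft
  set B := S.toRight
  have hsplit := G.card_edgesIn_add_card_edgesIn_le A B
  have hA := (G.card_edgesIn_le_density_mul (A \ B)).trans (Nat.mul_le_mul_right _ hdens)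
  have hB := (G.card_edgesIn_le_density_mul (B \ A)).trans (Nat.mul_le_mul_right _ hdens)
  have hI : ∑ x ∈ A ∩ B, (G.degree x + w x) ≤ m * #(A ∩ B) := by
    simpa [mul_comm] using sum_le_card_nsmul _ _ m fun x _ => hdeg x
  have hcard : #(A \ B) / 2 + #(B \ A) / 2 + #(A ∩ B) ≤ #S / 2 := by
    have : #A + #B = #S := card_toLeft_add_card_toRight
    have := card_sdiff_add_card_inter A B
    have := card_sdiff_add_card_inter B A
    rw [inter_comm] at this
    omega
  calc #((G.double w).edgesIn S)
      = #(G.edgesIn A) + #(G.edgesIn B) + ∑ x ∈ A ∩ B, w x := card_edgesIn_double S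
    _ ≤ #(G.edgesIn (A \ B)) + #(G.edgesIn (B \ A)) + ∑ x ∈ A ∩ B, (G.degree x + w x) := by
      rw [sum_add_distrib]
      omega
    _ ≤ m * (#(A \ B) / 2) + m * (#(B \ A) / 2) + m * #(A ∩ B) := by gcongr
    _ = m * (#(A \ B) / 2 + #(B \ A) / 2 + #(A ∩ B)) := by ring
    _ ≤ m * (#S / 2) := Nat.mul_le_mul_left _ hcard

end double

end Multigraph

/-- the regularization satisfies ω(G) ≤ ω(R(G)) ≤ max(Δ(G), ω(G)). -/
theorem stmt_10 (G : Multigraph) :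
    G.density ≤ (Multigraph.regularize G).density ∧
    (Multigraph.regularize G).density ≤ max G.maxDegree G.density := by
  by_cases h : (∀ x : G.V, G.degree x = G.maxDegree) ∧ G.density ≤ G.maxDegree
  · rw [Multigraph.regularize, if_pos h]
    exact ⟨le_rfl, le_max_right _ _⟩
  · rw [G.regularize_eq_double h]
    refine ⟨Multigraph.density_le_of_isSub _ (G.isSub_double _),
      Multigraph.density_double_le (fun x => ?_) (le_max_right _ _)⟩
    have := G.degree_le_maxDegree x
    omega
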